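/- For every positive integer n, the following identity holds: ∑_{k=1}^{n} k · (C(n,k))² · (C(n+k,k))² · ( 1/(2k) + ∑_{i=1}^{n+k} 1/i + ∑_{i=1}^{n-k} 1/i − 2·∑_{i=1}^{k} 1/i ) = 0, where the sums of reciprocals are taken over the rationals (an empty sum being 0). -/

import Mathlib

/-!
The summand is half the residue at `x = -k` of
`R(x) = x ∏_{j=1}^n (x - j)^2 / ∏_{j=0}^n (x + j)^2`. With `e_k = ∏_{j ≠ k} (x + j)^2`, this
residue is `(x ∏ (x - j)^2 / e_k)'(-k)`, and logarithmic differentiation evaluates it to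
`C(n,k)^2 C(n+k,k)^2 (1 + 2k (H_{n+k} + H_{n-k} - 2 H_k))`. Hermite interpolation of the numerator
at the double nodes `0, -1, …, -n` shows that the residues add up to the coefficient of
`x^{2n+1}` in the numerator, which is `1`; the residue at `0` is already `1`.
-/

open Finset Nat Polynomial

@[to_additive]
theorem Finset.prod_range_succ_erase {M : Type*} [CommMonoid M] (f : ℕ → M) {n k : ℕ}
    (hk : k ≤ n) :
    ∏ j ∈ (range (n + 1)).erase k, f j =
      (∏ j ∈ range k, f j) * ∏ j ∈ range (n - k), f (k + 1 + j) := by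
  have hsplit : (range (n + 1)).erase k = range k ∪ Ico (k + 1) (n + 1) := by
    ext j
    simp only [mem_erase, mem_range, mem_union, mem_Ico]
    omega
  rw [hsplit, prod_union (disjoint_left.2 fun j hj hj' ↦ by simp at hj hj'; omega),
    prod_Ico_eq_prod_range, show n + 1 - (k + 1) = n - k by omega]

theorem harmonic_add (k n : ℕ) :
    harmonic (k + n) = harmonic k + ∑ j ∈ range n, ((k + j + 1 : ℕ) : ℚ)⁻¹ := by
  simp only [harmonic, sum_range_add, add_assoc]

theorem sum_range_inv_sub_eq_neg_harmonic (k : ℕ) :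
    ∑ j ∈ range k, ((j : ℚ) - k)⁻¹ = -harmonic k := by
  rw [harmonic, ← sum_range_reflect, ← sum_neg_distrib]
  refine sum_congr rfl fun j hj ↦ ?_
  rw [mem_range] at hj
  rw [← inv_neg, Nat.cast_sub (by omega), Nat.cast_sub (by omega)]
  push_cast
  ring_nf

theorem prod_range_sub_sq (k : ℕ) : ∏ j ∈ range k, ((j : ℚ) - k) ^ 2 = (k ! : ℚ) ^ 2 := by
  rw [← prod_range_add_one_eq_factorial, ← prod_range_reflect, Nat.cast_prod, ← prod_pow]
  refine prod_congr rfl fun j hj ↦ ?_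
  rw [mem_range] at hj
  rw [Nat.cast_sub (by omega), Nat.cast_sub (by omega)]
  push_cast
  ring

theorem ascFactorial_eq_choose_mul_choose_mul {n k : ℕ} (hk : k ≤ n) :
    (k + 1).ascFactorial n = n.choose k * (n + k).choose k * (k ! * (n - k)!) := by
  refine Nat.eq_of_mul_eq_mul_left (factorial_pos k) ?_
  rw [factorial_mul_ascFactorial, add_comm k n, ← add_choose_mul_factorial_mul_factorial n k,
    ← choose_mul_factorial_mul_factorial hk]
  ring

namespace Polynomial

theorem X_sub_C_sq_dvd_of_isRoot_derivative {R : Type*} [CommRing R] {p : R[X]} {a : R}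
    (h : p.IsRoot a) (h' : (derivative p).IsRoot a) : (X - C a) ^ 2 ∣ p := by
  rcases eq_or_ne p 0 with rfl | hp
  · exact dvd_zero _
  · exact (le_rootMultiplicity_iff hp).1 ((one_lt_rootMultiplicity_iff_isRoot hp).2 ⟨h, h'⟩)

variable {K : Type*} [Field K] {ι : Type*}

theorem monic_prod_X_sub_C_sq (t : Finset ι) (r : ι → K) :
    (∏ j ∈ t, (X - C (r j)) ^ 2).Monic :=
  monic_prod_of_monic _ _ fun j _ ↦ (monic_X_sub_C (r j)).pow 2

theorem natDegree_prod_X_sub_C_sq (t : Finset ι) (r : ι → K) :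
    (∏ j ∈ t, (X - C (r j)) ^ 2).natDegree = 2 * #t := by
  rw [natDegree_prod_of_monic _ _ fun j _ ↦ (monic_X_sub_C (r j)).pow 2]
  simp [mul_comm]

theorem eval_derivative_prod_X_sub_C_sq [DecidableEq ι] (t : Finset ι) (r : ι → K) {x : K}
    (hx : ∀ j ∈ t, x ≠ r j) :
    (derivative (∏ j ∈ t, (X - C (r j)) ^ 2)).eval x =
      (∏ j ∈ t, (x - r j) ^ 2) * ∑ j ∈ t, 2 / (x - r j) := by
  rw [derivative_prod_finset, eval_finsetSum, mul_sum]
  refine sum_congr rfl fun i hi ↦ ?_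
  have hxi : x - r i ≠ 0 := sub_ne_zero.2 (hx i hi)
  rw [← mul_prod_erase t (fun j ↦ (x - r j) ^ 2) hi]
  simp only [eval_mul, eval_prod, eval_pow, eval_sub, eval_X, eval_C, derivative_X_sub_C_sq]
  field_simp

section DoublePoles

variable [DecidableEq ι] (p : K[X]) (s : Finset ι) (r : ι → K)

noncomputable def nodeCofactor (i : ι) : K[X] :=
  ∏ j ∈ s.erase i, (X - C (r j)) ^ 2

-- `(p / nodeCofactor s r i)'(r i)`, i.e. the residue of `p / ∏ j ∈ s, (X - r j) ^ 2` at `r i`.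
noncomputable def doublePoleResidue (i : ι) : K :=
  ((derivative p).eval (r i) * (nodeCofactor s r i).eval (r i) -
      p.eval (r i) * (derivative (nodeCofactor s r i)).eval (r i)) /
    (nodeCofactor s r i).eval (r i) ^ 2

variable {s r}

theorem eval_nodeCofactor (i : ι) (x : K) :
    (nodeCofactor s r i).eval x = ∏ j ∈ s.erase i, (x - r j) ^ 2 := by
  simp only [nodeCofactor, eval_prod, eval_pow, eval_sub, eval_X, eval_C]

theorem eval_derivative_nodeCofactor (hr : Function.Injective r) (i : ι) :
    (derivative (nodeCofactor s r i)).eval (r i) =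
      (nodeCofactor s r i).eval (r i) * ∑ j ∈ s.erase i, 2 / (r i - r j) := by
  rw [eval_nodeCofactor]
  exact eval_derivative_prod_X_sub_C_sq _ _ fun j hj ↦ hr.ne (ne_of_mem_erase hj).symm

theorem eval_nodeCofactor_ne_zero (hr : Function.Injective r) (i : ι) :
    (nodeCofactor s r i).eval (r i) ≠ 0 := by
  rw [eval_nodeCofactor]
  exact prod_ne_zero_iff.2 fun j hj ↦
    pow_ne_zero 2 (sub_ne_zero.2 (hr.ne (ne_of_mem_erase hj).symm))

theorem X_sub_C_sq_dvd_nodeCofactor {i j : ι} (hi : i ∈ s) (hij : i ≠ j) :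
    (X - C (r i)) ^ 2 ∣ nodeCofactor s r j :=
  dvd_prod_of_mem _ (mem_erase.2 ⟨hij, hi⟩)

theorem monic_nodeCofactor (i : ι) : (nodeCofactor s r i).Monic :=
  monic_prod_X_sub_C_sq _ r

theorem natDegree_nodeCofactor {i : ι} (hi : i ∈ s) :
    (nodeCofactor s r i).natDegree = 2 * (#s - 1) := by
  rw [nodeCofactor, natDegree_prod_X_sub_C_sq, card_erase_of_mem hi]

theorem eq_sum_mul_nodeCofactor (hr : Function.Injective r) (hp : p.natDegree < 2 * #s) :
    p = ∑ i ∈ s, (C (p.eval (r i) / (nodeCofactor s r i).eval (r i)) +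
      C (doublePoleResidue p s r i) * (X - C (r i))) * nodeCofactor s r i := by
  set q := ∑ i ∈ s, (C (p.eval (r i) / (nodeCofactor s r i).eval (r i)) +
      C (doublePoleResidue p s r i) * (X - C (r i))) * nodeCofactor s r i with hq
  have hdvd : ∀ i ∈ s, (X - C (r i)) ^ 2 ∣ p - q := by
    intro i hi
    have he := eval_nodeCofactor_ne_zero hr (s := s) i
    rw [hq, ← add_sum_erase _ _ hi, sub_add_eq_sub_sub]
    refine dvd_sub (X_sub_C_sq_dvd_of_isRoot_derivative ?_ ?_)
      (dvd_sum fun j hj ↦ (X_sub_C_sq_dvd_nodeCofactor hi (ne_of_mem_erase hj).symm).mul_left _)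
    · simp [he]
    · simp only [doublePoleResidue, derivative_sub, derivative_mul, derivative_add, derivative_C,
        zero_mul, derivative_X, sub_zero, mul_one, zero_add, IsRoot.def, eval_sub, eval_add,
        eval_mul, eval_C, eval_X, sub_self, mul_zero, add_zero]
      field_simp
      ring
  have hprod : (∏ i ∈ s, (X - C (r i)) ^ 2) ∣ p - q :=
    prod_dvd_of_coprime (fun i _ j _ hij ↦ (pairwise_coprime_X_sub_C hr hij).pow) hdvd
  have hdeg : (p - q).natDegree < (∏ i ∈ s, (X - C (r i)) ^ 2).natDegree := by
    have hq_deg : q.natDegree ≤ 2 * #s - 1 := by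
      refine natDegree_sum_le_of_forall_le _ _ fun i hi ↦ (natDegree_mul_le).trans ?_
      have hlin : (C (p.eval (r i) / (nodeCofactor s r i).eval (r i)) +
          C (doublePoleResidue p s r i) * (X - C (r i))).natDegree ≤ 1 := by
        compute_degree
      rw [natDegree_nodeCofactor hi]
      have := card_pos.2 ⟨i, hi⟩
      omega
    rw [natDegree_prod_X_sub_C_sq]
    exact (natDegree_sub_le p q).trans_lt (max_lt hp (by omega))
  exact (sub_eq_zero.1 (eq_zero_of_dvd_of_natDegree_lt hprod hdeg))

theorem coeff_eq_sum_doublePoleResidue (hr : Function.Injective r) (hp : p.natDegree < 2 * #s) :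
    p.coeff (2 * #s - 1) = ∑ i ∈ s, doublePoleResidue p s r i := by
  conv_lhs => rw [eq_sum_mul_nodeCofactor p hr hp]
  rw [finsetSum_coeff]
  refine sum_congr rfl fun i hi ↦ ?_
  have hcard : 2 * #s - 1 = (nodeCofactor s r i).natDegree + 1 := by
    rw [natDegree_nodeCofactor hi]
    have := card_pos.2 ⟨i, hi⟩
    omega
  rw [hcard, add_mul, mul_sub, ← C_mul, sub_mul, mul_assoc, coeff_add, coeff_sub, coeff_C_mul,
    coeff_C_mul, coeff_C_mul, coeff_X_mul, (monic_nodeCofactor i).coeff_natDegree,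
    coeff_eq_zero_of_natDegree_lt (Nat.lt_succ_self _)]
  ring

end DoublePoles

end Polynomial

namespace Beukers

noncomputable def poly (n : ℕ) : ℚ[X] := X * ∏ j ∈ range n, (X - C ((j : ℚ) + 1)) ^ 2

theorem neg_natCast_injective : Function.Injective (fun j : ℕ ↦ -(j : ℚ)) :=
  neg_injective.comp Nat.cast_injective

theorem eval_nodeCofactor_neg {n k : ℕ} (hk : k ≤ n) :
    (nodeCofactor (range (n + 1)) (fun j : ℕ ↦ -(j : ℚ)) k).eval (-(k : ℚ)) =
      ((k ! * (n - k)! : ℕ) : ℚ) ^ 2 := by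
  rw [eval_nodeCofactor, prod_range_succ_erase _ hk]
  simp only [neg_sub_neg, prod_range_sub_sq]
  rw [← prod_range_add_one_eq_factorial (n - k)]
  push_cast
  rw [mul_pow, ← prod_pow]
  congr 1
  refine prod_congr rfl fun j _ ↦ ?_
  ring

theorem eval_derivative_nodeCofactor_neg {n k : ℕ} (hk : k ≤ n) :
    (derivative (nodeCofactor (range (n + 1)) (fun j : ℕ ↦ -(j : ℚ)) k)).eval (-(k : ℚ)) =
      ((k ! * (n - k)! : ℕ) : ℚ) ^ 2 * (2 * (harmonic (n - k) - harmonic k)) := by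
  refine (eval_derivative_nodeCofactor (s := range (n + 1)) neg_natCast_injective k).trans ?_
  rw [eval_nodeCofactor_neg hk, sum_range_succ_erase _ hk]
  simp only [neg_sub_neg, div_eq_mul_inv, ← mul_sum, sum_range_inv_sub_eq_neg_harmonic, harmonic]
  push_cast
  simp only [show ∀ j : ℕ, (k : ℚ) + 1 + j - k = j + 1 from fun j ↦ by ring]
  ring

theorem prod_range_neg_sub_sq (n k : ℕ) :
    ∏ j ∈ range n, (-(k : ℚ) - (j + 1)) ^ 2 = ((k + 1).ascFactorial n : ℚ) ^ 2 := by
  rw [ascFactorial_eq_prod_range, Nat.cast_prod, ← prod_pow]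
  refine prod_congr rfl fun j _ ↦ ?_
  push_cast
  ring

theorem eval_poly (n k : ℕ) :
    (poly n).eval (-(k : ℚ)) = -k * ((k + 1).ascFactorial n : ℚ) ^ 2 := by
  simp only [poly, eval_mul, eval_X, eval_prod, eval_pow, eval_sub, eval_C, prod_range_neg_sub_sq]

theorem eval_derivative_poly (n k : ℕ) :
    (derivative (poly n)).eval (-(k : ℚ)) =
      ((k + 1).ascFactorial n : ℚ) ^ 2 * (1 + 2 * k * (harmonic (k + n) - harmonic k)) := by
  have hQ := eval_derivative_prod_X_sub_C_sq (range n) (fun j : ℕ ↦ (j : ℚ) + 1)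
    (x := -(k : ℚ)) fun j _ ↦ ((neg_nonpos.2 k.cast_nonneg).trans_lt (by positivity)).ne
  rw [poly, derivative_mul, derivative_X, one_mul, eval_add, eval_mul, eval_X, hQ,
    prod_range_neg_sub_sq, harmonic_add]
  have hterm (j : ℕ) : 2 / (-(k : ℚ) - (j + 1)) = -2 * ((k + j + 1 : ℕ) : ℚ)⁻¹ := by
    rw [show -(k : ℚ) - (j + 1) = -((k + j + 1 : ℕ) : ℚ) by push_cast; ring, div_neg,
      div_eq_mul_inv, neg_mul]
  simp only [eval_prod, eval_pow, eval_sub, eval_X, eval_C, prod_range_neg_sub_sq, hterm,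
    ← mul_sum]
  ring

theorem doublePoleResidue_poly {n k : ℕ} (hk : k ≤ n) :
    doublePoleResidue (poly n) (range (n + 1)) (fun j : ℕ ↦ -(j : ℚ)) k =
      ((n.choose k * (n + k).choose k : ℕ) : ℚ) ^ 2 *
        (1 + 2 * k * (harmonic (n + k) + harmonic (n - k) - 2 * harmonic k)) := by
  rw [doublePoleResidue, eval_poly, eval_derivative_poly, eval_nodeCofactor_neg hk,
    eval_derivative_nodeCofactor_neg hk, ascFactorial_eq_choose_mul_choose_mul hk, add_comm k n]
  have hfac : ((k ! * (n - k)! : ℕ) : ℚ) ≠ 0 := by positivity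
  field_simp
  push_cast
  ring

theorem monic_poly (n : ℕ) : (poly n).Monic :=
  monic_X.mul (monic_prod_X_sub_C_sq _ _)

theorem natDegree_poly (n : ℕ) : (poly n).natDegree = 2 * n + 1 := by
  rw [poly, natDegree_mul X_ne_zero (monic_prod_X_sub_C_sq _ _).ne_zero, natDegree_X,
    natDegree_prod_X_sub_C_sq, card_range]
  ring

theorem sum_choose_sq_mul_harmonic_eq_zero (n : ℕ) :
    ∑ k ∈ Icc 1 n, ((n.choose k * (n + k).choose k : ℕ) : ℚ) ^ 2 *
      (1 + 2 * k * (harmonic (n + k) + harmonic (n - k) - 2 * harmonic k)) = 0 := by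
  have h := coeff_eq_sum_doublePoleResidue (poly n) (s := range (n + 1)) neg_natCast_injective
    (by rw [natDegree_poly, card_range]; omega)
  rw [card_range, show 2 * (n + 1) - 1 = (poly n).natDegree by rw [natDegree_poly]; omega,
    (monic_poly n).coeff_natDegree,
    sum_congr rfl fun k hk ↦ doublePoleResidue_poly (Nat.lt_succ_iff.1 (mem_range.1 hk)),
    range_succ_eq_Icc_zero, ← insert_Icc_add_one_left_eq_Icc (zero_le n),
    sum_insert (by simp)] at h
  simpa using h

end Beukers

theorem beukers_binomial_identity_general (n : ℕ) :
    ∑ k ∈ Finset.Icc 1 n,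
      (k : ℚ) * (n.choose k : ℚ) ^ 2 * ((n + k).choose k : ℚ) ^ 2 *
        (1 / (2 * (k : ℚ)) +
          (∑ i ∈ Finset.Icc 1 (n + k), (1 : ℚ) / (i : ℚ)) +
          (∑ i ∈ Finset.Icc 1 (n - k), (1 : ℚ) / (i : ℚ)) -
          2 * ∑ i ∈ Finset.Icc 1 k, (1 : ℚ) / (i : ℚ)) = 0 := by
  simp only [one_div, ← harmonic_eq_sum_Icc]
  rw [← zero_div 2, ← Beukers.sum_choose_sq_mul_harmonic_eq_zero n, sum_div]
  refine sum_congr rfl fun k hk ↦ ?_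
  have hk0 : (k : ℚ) ≠ 0 := Nat.cast_ne_zero.2 (Nat.one_le_iff_ne_zero.1 (mem_Icc.1 hk).1)
  field_simp
  push_cast
  ring

theorem beukers_binomial_identity (n : ℕ) (hn : 0 < n) :
    ∑ k ∈ Finset.Icc 1 n,
      (k : ℚ) * (n.choose k : ℚ) ^ 2 * ((n + k).choose k : ℚ) ^ 2 *
        (1 / (2 * (k : ℚ)) +
          (∑ i ∈ Finset.Icc 1 (n + k), (1 : ℚ) / (i : ℚ)) +
          (∑ i ∈ Finset.Icc 1 (n - k), (1 : ℚ) / (i : ℚ)) -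
          2 * ∑ i ∈ Finset.Icc 1 k, (1 : ℚ) / (i : ℚ)) = 0 :=
  beukers_binomial_identity_general n
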